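/- Let F(u,v,ω) = Σ_{i=0}^n ω^{n−i} f_i(u,v) be the homogenization of f ∈ ℝ[x,y] of degree n ≥ 2. Define B = F_vv F_u² − F_uu F_v² + ω^{2(n−1)}(F_vv − F_uu) and C = F_vv F_u F_v − F_uv F_v² − ω^{2(n−1)} F_uv. Then ((u/2)B + vC)|_{ω=0} = (n/(2(n−1)))·u·f_n(u,v)·|Hess f_n(u,v)|. -/

import Mathlib

open MvPolynomial

/-- The Hessian determinant `p_uu·p_vv − p_uv²` of a bivariate polynomial. -/
noncomputable def hess (p : MvPolynomial (Fin 2) ℝ) : MvPolynomial (Fin 2) ℝ :=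
  pderiv 0 (pderiv 0 p) * pderiv 1 (pderiv 1 p) - (pderiv 0 (pderiv 1 p)) ^ 2

/-- Evaluation of a bivariate polynomial at a point of ℝ². -/
noncomputable def ev (p : MvPolynomial (Fin 2) ℝ) (u v : ℝ) : ℝ :=
  eval ![u, v] p

/-- A bivariate polynomial viewed as a polynomial in the three variables `u, v, ω`. -/
noncomputable def lift2 (p : MvPolynomial (Fin 2) ℝ) : MvPolynomial (Fin 3) ℝ :=
  rename Fin.castSucc p

/-- The homogenization `F(u,v,ω) = Σ_{i=0}^n ω^{n−i} f_i(u,v)` of `f`. -/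
noncomputable def homog (n : ℕ) (f : MvPolynomial (Fin 2) ℝ) : MvPolynomial (Fin 3) ℝ :=
  ∑ i ∈ Finset.range (n + 1), X 2 ^ (n - i) * lift2 (homogeneousComponent i f)

lemma degree_fin2 (d : Fin 2 →₀ ℕ) : d.degree = d 0 + d 1 := by
  rw [Finsupp.degree_apply, Finset.sum_subset (Finset.subset_univ d.support)
      (fun i _ hi => Finsupp.notMem_support_iff.mp hi), Fin.sum_univ_two]

lemma pderiv_pderiv (p : MvPolynomial (Fin 2) ℝ) (i j : Fin 2) :
    pderiv i (pderiv j p) = pderiv j (pderiv i p) := by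
  rcases eq_or_ne i j with rfl | hij
  · rfl
  · conv_lhs => rw [p.as_sum]
    conv_rhs => rw [p.as_sum]
    rw [map_sum, map_sum, map_sum, map_sum]
    refine Finset.sum_congr rfl fun d _ => ?_
    rw [pderiv_monomial, pderiv_monomial, pderiv_monomial, pderiv_monomial]
    have h1 : (d - Finsupp.single j 1 : Fin 2 →₀ ℕ) i = d i := by
      rw [Finsupp.tsub_apply, Finsupp.single_eq_of_ne' hij.symm, Nat.sub_zero]
    have h2 : (d - Finsupp.single i 1 : Fin 2 →₀ ℕ) j = d j := by
      rw [Finsupp.tsub_apply, Finsupp.single_eq_of_ne' hij, Nat.sub_zero]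
    rw [h1, h2, tsub_tsub, tsub_tsub, add_comm (Finsupp.single j 1), mul_right_comm]

lemma X_mul_pderiv_monomial (i : Fin 2) (d : Fin 2 →₀ ℕ) (c : ℝ) :
    X i * pderiv i (monomial d c) = C (d i : ℝ) * monomial d c := by
  rw [pderiv_monomial, C_mul_monomial]
  by_cases h : d i = 0
  · simp [h]
  · rw [← pow_one (X i : MvPolynomial (Fin 2) ℝ), ← monomial_single_add,
      add_tsub_cancel_of_le (Finsupp.single_le_iff.mpr (Nat.one_le_iff_ne_zero.mpr h)),
      mul_comm c]

lemma euler {m : ℕ} {p : MvPolynomial (Fin 2) ℝ} (hp : p.IsHomogeneous m) :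
    X 0 * pderiv 0 p + X 1 * pderiv 1 p = C (m : ℝ) * p := by
  conv_lhs => rw [p.as_sum]
  conv_rhs => rw [p.as_sum]
  rw [map_sum, map_sum, Finset.mul_sum, Finset.mul_sum, Finset.mul_sum,
    ← Finset.sum_add_distrib]
  refine Finset.sum_congr rfl fun d hd => ?_
  rw [X_mul_pderiv_monomial, X_mul_pderiv_monomial, ← add_mul, ← C_add]
  have hdm : d.degree = m := by
    by_contra h
    exact mem_support_iff.mp hd (hp.coeff_eq_zero h)
  rw [degree_fin2] at hdm
  norm_cast
  rw [hdm]

lemma isHomogeneous_pderiv {m : ℕ} {p : MvPolynomial (Fin 2) ℝ} (hp : p.IsHomogeneous m)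
    (i : Fin 2) : (pderiv i p).IsHomogeneous (m - 1) := by
  rw [show pderiv i p = ∑ d ∈ p.support, pderiv i (monomial d (coeff d p)) by
    rw [← map_sum, ← p.as_sum]]
  refine IsHomogeneous.sum _ _ _ fun d hd => ?_
  rw [pderiv_monomial]
  by_cases h : d i = 0
  · rw [h]
    simp only [Nat.cast_zero, mul_zero, monomial_zero]
    exact isHomogeneous_zero _ _ _
  · apply isHomogeneous_monomial
    have hdm : d.degree = m := by
      by_contra hc
      exact mem_support_iff.mp hd (hp.coeff_eq_zero hc)
    rw [degree_fin2] at hdm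
    rw [degree_fin2, Finsupp.tsub_apply, Finsupp.tsub_apply, Finsupp.single_apply,
      Finsupp.single_apply]
    obtain rfl | rfl : i = 0 ∨ i = 1 := by omega
    · norm_num
      omega
    · norm_num
      omega

lemma pderiv_homog_term (j : Fin 2) (k : ℕ) (p : MvPolynomial (Fin 2) ℝ) :
    pderiv (Fin.castSucc j) (X 2 ^ k * lift2 p) = X 2 ^ k * lift2 (pderiv j p) := by
  have h2 : pderiv (Fin.castSucc j) ((X 2 : MvPolynomial (Fin 3) ℝ) ^ k) = 0 := by
    rw [pderiv_pow, pderiv_X_of_ne, mul_zero]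
    refine Fin.ne_of_val_ne ?_
    have := j.is_lt
    simp only [Fin.coe_castSucc]
    omega
  rw [pderiv_mul, h2, zero_mul, zero_add, lift2, lift2,
    pderiv_rename (Fin.castSucc_injective 2)]

lemma pderiv_homogsum (j : Fin 2) (n : ℕ) (p : ℕ → MvPolynomial (Fin 2) ℝ) :
    pderiv (Fin.castSucc j) (∑ i ∈ Finset.range (n + 1), X 2 ^ (n - i) * lift2 (p i)) =
      ∑ i ∈ Finset.range (n + 1), X 2 ^ (n - i) * lift2 (pderiv j (p i)) := by
  rw [map_sum]
  exact Finset.sum_congr rfl fun i _ => pderiv_homog_term j _ _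

lemma comp_castSucc (u v : ℝ) : (![u, v, 0] : Fin 3 → ℝ) ∘ Fin.castSucc = ![u, v] := by
  funext i; fin_cases i <;> rfl

lemma eval_homogsum (n : ℕ) (p : ℕ → MvPolynomial (Fin 2) ℝ) (u v : ℝ) :
    eval ![u, v, 0] (∑ i ∈ Finset.range (n + 1), X 2 ^ (n - i) * lift2 (p i)) = ev (p n) u v := by
  rw [map_sum, Finset.sum_eq_single_of_mem n (Finset.self_mem_range_succ n)]
  · rw [eval_mul, map_pow, eval_X, Nat.sub_self, pow_zero, one_mul, lift2, eval_rename,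
      comp_castSucc, ev]
  · intro i hi hne
    rw [eval_mul, map_pow, eval_X, show (![u, v, (0:ℝ)] : Fin 3 → ℝ) 2 = 0 from rfl,
      zero_pow, zero_mul]
    have := Finset.mem_range.mp hi
    omega

/-- Let `F` be the homogenization of `f ∈ ℝ[x,y]` of degree `n ≥ 2`, and let
`B = F_vv F_u² − F_uu F_v² + ω^{2(n−1)}(F_vv − F_uu)`,
`C = F_vv F_u F_v − F_uv F_v² − ω^{2(n−1)} F_uv`.
Then `((u/2)B + vC)|_{ω=0} = (n/(2(n−1)))·u·f_n(u,v)·|Hess f_n|(u,v)`. -/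
theorem coefficient_uB_plus_vC_at_infinity (n : ℕ) (hn : 2 ≤ n)
    (f : MvPolynomial (Fin 2) ℝ) (hf : f.totalDegree = n)
    (F Fu Fv Fuu Fuv Fvv B Cq : MvPolynomial (Fin 3) ℝ)
    (hF : F = homog n f)
    (hFu : Fu = pderiv 0 F) (hFv : Fv = pderiv 1 F)
    (hFuu : Fuu = pderiv 0 Fu) (hFuv : Fuv = pderiv 1 Fu) (hFvv : Fvv = pderiv 1 Fv)
    (hB : B = Fvv * Fu ^ 2 - Fuu * Fv ^ 2 + X 2 ^ (2 * (n - 1)) * (Fvv - Fuu))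
    (hC : Cq = Fvv * Fu * Fv - Fuv * Fv ^ 2 - X 2 ^ (2 * (n - 1)) * Fuv) :
    ∀ u v : ℝ,
      (u / 2) * eval ![u, v, 0] B + v * eval ![u, v, 0] Cq =
        ((n : ℝ) / (2 * ((n : ℝ) - 1))) * u * ev (homogeneousComponent n f) u v *
          ev (hess (homogeneousComponent n f)) u v := by
  subst hF hFu hFv hFuu hFuv hFvv hB hC
  intro u v
  set g := homogeneousComponent n f with hg_def
  have hg : g.IsHomogeneous n := homogeneousComponent_isHomogeneous n f
  have h0 : (0 : Fin 3) = Fin.castSucc 0 := rfl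
  have h1 : (1 : Fin 3) = Fin.castSucc 1 := rfl
  -- first derivatives as sums
  have hFu' : pderiv (0 : Fin 3) (homog n f) =
      ∑ i ∈ Finset.range (n + 1), X 2 ^ (n - i) * lift2 (pderiv 0 (homogeneousComponent i f)) := by
    rw [homog, h0, pderiv_homogsum 0 n (fun i => homogeneousComponent i f)]
  have hFv' : pderiv (1 : Fin 3) (homog n f) =
      ∑ i ∈ Finset.range (n + 1), X 2 ^ (n - i) * lift2 (pderiv 1 (homogeneousComponent i f)) := by
    rw [homog, h1, pderiv_homogsum 1 n (fun i => homogeneousComponent i f)]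
  -- evaluations
  have hEu : eval ![u, v, 0] (pderiv (0 : Fin 3) (homog n f)) = ev (pderiv 0 g) u v := by
    rw [hFu', eval_homogsum n (fun i => pderiv 0 (homogeneousComponent i f))]
  have hEv : eval ![u, v, 0] (pderiv (1 : Fin 3) (homog n f)) = ev (pderiv 1 g) u v := by
    rw [hFv', eval_homogsum n (fun i => pderiv 1 (homogeneousComponent i f))]
  have hEuu : eval ![u, v, 0] (pderiv (0 : Fin 3) (pderiv (0 : Fin 3) (homog n f))) =
      ev (pderiv 0 (pderiv 0 g)) u v := by
    rw [hFu', h0, pderiv_homogsum 0 n (fun i => pderiv 0 (homogeneousComponent i f)),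
      eval_homogsum n (fun i => pderiv 0 (pderiv 0 (homogeneousComponent i f)))]
  have hEuv : eval ![u, v, 0] (pderiv (1 : Fin 3) (pderiv (0 : Fin 3) (homog n f))) =
      ev (pderiv 1 (pderiv 0 g)) u v := by
    rw [hFu', h1, pderiv_homogsum 1 n (fun i => pderiv 0 (homogeneousComponent i f)),
      eval_homogsum n (fun i => pderiv 1 (pderiv 0 (homogeneousComponent i f)))]
  have hEvv : eval ![u, v, 0] (pderiv (1 : Fin 3) (pderiv (1 : Fin 3) (homog n f))) =
      ev (pderiv 1 (pderiv 1 g)) u v := by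
    rw [hFv', h1, pderiv_homogsum 1 n (fun i => pderiv 1 (homogeneousComponent i f)),
      eval_homogsum n (fun i => pderiv 1 (pderiv 1 (homogeneousComponent i f)))]
  -- notation for evaluated quantities
  set P := ev g u v
  set a := ev (pderiv 0 g) u v
  set b := ev (pderiv 1 g) u v
  set A := ev (pderiv 0 (pderiv 0 g)) u v
  set Bq := ev (pderiv 1 (pderiv 0 g)) u v
  set Cv := ev (pderiv 1 (pderiv 1 g)) u v
  -- Euler identities
  have euler_ev : ∀ {m : ℕ} {p : MvPolynomial (Fin 2) ℝ}, p.IsHomogeneous m →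
      u * ev (pderiv 0 p) u v + v * ev (pderiv 1 p) u v = (m : ℝ) * ev p u v := by
    intro m p hp
    have := congrArg (eval ![u, v]) (euler hp)
    simpa [ev] using this
  have hcast : ((n - 1 : ℕ) : ℝ) = (n : ℝ) - 1 := by
    rw [Nat.cast_sub (by omega), Nat.cast_one]
  have e1 : u * a + v * b = (n : ℝ) * P := euler_ev hg
  have e2 : u * A + v * Bq = ((n : ℝ) - 1) * a := by
    rw [← hcast]; exact euler_ev (isHomogeneous_pderiv hg 0)
  have e3 : u * Bq + v * Cv = ((n : ℝ) - 1) * b := by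
    have := euler_ev (isHomogeneous_pderiv hg 1)
    rw [pderiv_pderiv g 0 1] at this
    rw [← hcast]; exact this
  -- evaluate B and Cq
  have hzero : eval ![u, v, 0] ((X 2 : MvPolynomial (Fin 3) ℝ) ^ (2 * (n - 1))) = 0 := by
    rw [map_pow, eval_X, show (![u, v, (0:ℝ)] : Fin 3 → ℝ) 2 = 0 from rfl, zero_pow]
    omega
  have hhess : ev (hess g) u v = A * Cv - Bq ^ 2 := by
    rw [hess, pderiv_pderiv g 0 1, ev, map_sub, map_mul, map_pow]
    rfl
  have hv2 : (![u, v, (0:ℝ)] : Fin 3 → ℝ) 2 = 0 := rfl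
  have h2n : 2 * (n - 1) ≠ 0 := by omega
  simp only [map_add, map_sub, map_mul, map_pow, eval_X, hv2, zero_pow h2n, hEu, hEv, hEuu,
    hEuv, hEvv, hhess, zero_mul, add_zero, mul_zero, sub_zero]
  have hD : (2 * ((n:ℝ) - 1)) ≠ 0 := by
    have : (2:ℝ) ≤ (n:ℝ) := by exact_mod_cast hn
    nlinarith
  rw [div_mul_eq_mul_div, div_mul_eq_mul_div, div_mul_eq_mul_div, div_mul_eq_mul_div,
    eq_div_iff hD]
  linear_combination (u * A * Cv - u * Bq ^ 2) * e1 +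
    ((1 - (n : ℝ)) * b ^ 2 - v * b * Cv - u * a * Cv) * e2 +
    (((n : ℝ) - 1) * a * b + v * b * Bq + u * a * Bq) * e3
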